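/- Let X be a nonempty set, Θ a nondegenerate open interval of ℝ, and M : ⋃_{n≥1} Xⁿ → Θ a function (with M_n its restriction to Xⁿ) that is symmetric, strictly internal, and asymptotically idempotent, and satisfies inf M₁(X) = inf Θ and sup M₁(X) = sup Θ. Then there exists a function ψ ∈ Ψ(X,Θ) possessing properties [Z] and [C] such that ϑ_{n,ψ}(x₁,…,xₙ) = M_n(x₁,…,xₙ) for all n ∈ ℕ and x₁,…,xₙ ∈ X. -/

import Mathlib

open Filter Topology

/-- `ψ ∈ Ψ(X,Θ)`: for every `x ∈ X` there exist `t₊ < t₋` in `Θ` with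
`ψ x t₊ > 0 > ψ x t₋`. -/
def PsiClass {X : Type*} (Θ : Set ℝ) (ψ : X → ℝ → ℝ) : Prop :=
  ∀ x : X, ∃ tp ∈ Θ, ∃ tm ∈ Θ, tp < tm ∧ 0 < ψ x tp ∧ ψ x tm < 0

/-- `ϑ` is a generalized `ψ`-estimator on `n`-tuples: for every tuple `x`,
`ϑ x ∈ Θ` and `ϑ x` is a point of sign change (of decreasing type) of the map
`t ↦ ∑ i, ψ (x i) t` on `Θ`. -/
def IsThetaEst {X : Type*} (Θ : Set ℝ) (ψ : X → ℝ → ℝ) (n : ℕ)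
    (ϑ : (Fin n → X) → ℝ) : Prop :=
  ∀ x : Fin n → X, ϑ x ∈ Θ ∧
    (∀ t ∈ Θ, t < ϑ x → 0 < ∑ i, ψ (x i) t) ∧
    (∀ t ∈ Θ, ϑ x < t → ∑ i, ψ (x i) t < 0)

/-- The `k*n`-tuple in which each entry `x i` of the `k`-tuple `x` is repeated
`n` times. -/
def repBlock {X : Type*} {k : ℕ} (n : ℕ) (x : Fin k → X) (i : Fin (k * n)) : X :=
  x ⟨i.val / n, by
    have h := i.isLt
    rcases Nat.eq_zero_or_pos n with hn | hn
    · subst hn; simp at h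
    · exact (Nat.div_lt_iff_lt_mul hn).mpr h⟩


namespace ZC

variable {X : Type*}

private def consEquiv {n m : ℕ} (σ : Fin n ≃ Fin m) : Fin (n + 1) ≃ Fin (m + 1) where
  toFun := Fin.cases 0 (fun i => (σ i).succ)
  invFun := Fin.cases 0 (fun i => (σ.symm i).succ)
  left_inv := by
    intro i
    induction i using Fin.cases with
    | zero => simp
    | succ i => simp
  right_inv := by
    intro i
    induction i using Fin.cases with
    | zero => simp
    | succ i => simp

private theorem perm_swap_aux (a b : X) (l : List X) :
    ∃ σ : Equiv.Perm (Fin (l.length + 2)),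
      ∀ i : Fin (l.length + 2), List.get (a :: b :: l) (σ i) = List.get (b :: a :: l) i := by
  have h0 : (0 : ℕ) < l.length + 2 := by omega
  have h1 : (1 : ℕ) < l.length + 2 := by omega
  refine ⟨Equiv.swap ⟨0, h0⟩ ⟨1, h1⟩, fun i => ?_⟩
  rcases i with ⟨iv, hi⟩
  match iv, hi with
  | 0, hi =>
    have e : (⟨0, hi⟩ : Fin (l.length + 2)) = ⟨0, h0⟩ := rfl
    rw [e, Equiv.swap_apply_left]
    rfl
  | 1, hi =>
    have e : (⟨1, hi⟩ : Fin (l.length + 2)) = ⟨1, h1⟩ := rfl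
    rw [e, Equiv.swap_apply_right]
    rfl
  | (j+2), hi =>
    have e1 : (⟨j+2, hi⟩ : Fin (l.length + 2)) ≠ ⟨0, h0⟩ := by
      simp [Fin.ext_iff]
    have e2 : (⟨j+2, hi⟩ : Fin (l.length + 2)) ≠ ⟨1, h1⟩ := by
      simp [Fin.ext_iff]
    rw [Equiv.swap_apply_of_ne_of_ne e1 e2]
    rfl

theorem exists_equiv_of_perm : ∀ {l₁ l₂ : List X}, l₁.Perm l₂ →
    ∃ σ : Fin l₁.length ≃ Fin l₂.length, ∀ i, l₂.get (σ i) = l₁.get i := by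
  intro l₁ l₂ h
  induction h with
  | nil => exact ⟨Equiv.refl _, fun i => i.elim0⟩
  | cons a h ih =>
    obtain ⟨σ, hσ⟩ := ih
    refine ⟨consEquiv σ, fun i => ?_⟩
    induction i using Fin.cases with
    | zero => simp [consEquiv]
    | succ i => simpa [consEquiv] using hσ i
  | swap a b l => exact perm_swap_aux a b l
  | trans h₁ h₂ ih₁ ih₂ =>
    obtain ⟨σ₁, hσ₁⟩ := ih₁
    obtain ⟨σ₂, hσ₂⟩ := ih₂
    exact ⟨σ₁.trans σ₂, fun i => by
      rw [Equiv.trans_apply, hσ₂, hσ₁]⟩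

variable (M : ∀ n : ℕ, (Fin n → X) → ℝ)

/-- value of `M` on a list. -/
def Fval (l : List X) : ℝ := M l.length l.get

variable {M}

theorem M_congr (hsym : ∀ n : ℕ, 0 < n → ∀ (x : Fin n → X) (π : Equiv.Perm (Fin n)),
      M n (x ∘ π) = M n x) {n₁ n₂ : ℕ} (h : n₁ = n₂) (f : Fin n₁ → X) (g : Fin n₂ → X)
    (σ : Fin n₁ ≃ Fin n₂) (hfg : ∀ i, g (σ i) = f i) : M n₁ f = M n₂ g := by
  subst h
  rcases Nat.eq_zero_or_pos n₁ with h0 | hpos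
  · subst h0; exact congrArg _ (funext fun i => i.elim0)
  · calc M n₁ f = M n₁ (g ∘ σ) := congrArg _ (funext fun i => (hfg i).symm)
    _ = M n₁ g := hsym n₁ hpos g σ

theorem Fval_perm (hsym : ∀ n : ℕ, 0 < n → ∀ (x : Fin n → X) (π : Equiv.Perm (Fin n)),
      M n (x ∘ π) = M n x) {l₁ l₂ : List X} (h : l₁.Perm l₂) :
    Fval M l₁ = Fval M l₂ := by
  obtain ⟨σ, hσ⟩ := exists_equiv_of_perm h
  exact M_congr hsym h.length_eq _ _ σ hσ

variable (M) in
/-- value of `M` on a multiset. -/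
noncomputable def mval (s : Multiset X) : ℝ := Fval M s.toList

theorem exists_coe_rep (s : Multiset X) : ∃ l : List X, s = ↑l :=
  ⟨s.toList, (Multiset.coe_toList s).symm⟩

theorem Fval_eq {l : List X} {n : ℕ} (h : l.length = n) (x : Fin n → X)
    (hx : ∀ i : Fin l.length, l.get i = x (Fin.cast h i)) : Fval M l = M n x := by
  subst h
  exact congrArg _ (funext fun i => hx i)

section bridge

variable (hsym : ∀ n : ℕ, 0 < n → ∀ (x : Fin n → X) (π : Equiv.Perm (Fin n)),
      M n (x ∘ π) = M n x)
include hsym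

theorem mval_coe (l : List X) : mval M ↑l = Fval M l := by
  apply Fval_perm hsym
  rw [← Multiset.coe_eq_coe, Multiset.coe_toList]

theorem mval_msOf {n : ℕ} (x : Fin n → X) : mval M ↑(List.ofFn x) = M n x := by
  rw [mval_coe hsym]
  exact Fval_eq (List.length_ofFn (f := x)) x (fun i => by
    rw [List.get_ofFn])

theorem mval_singleton (x : X) : mval M {x} = M 1 (fun _ => x) := by
  have h : ({x} : Multiset X) = ↑(List.ofFn (fun _ : Fin 1 => x)) := by simp
  rw [h, mval_msOf hsym]

omit hsym in
theorem Fval_append (l₁ l₂ : List X) :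
    Fval M (l₁ ++ l₂) = M (l₁.length + l₂.length) (Fin.append l₁.get l₂.get) := by
  apply Fval_eq ((List.length_append : (l₁ ++ l₂).length = l₁.length + l₂.length))
  intro i
  rcases lt_or_ge i.val l₁.length with hlt | hge
  · have h2 : Fin.cast ((List.length_append : (l₁ ++ l₂).length = l₁.length + l₂.length)) i = Fin.castAdd l₂.length ⟨i.val, hlt⟩ :=
      Fin.ext rfl
    calc (l₁ ++ l₂).get i = l₁.get ⟨i.val, hlt⟩ := by
          simp only [List.get_eq_getElem]
          exact List.getElem_append_left hlt
      _ = Fin.append l₁.get l₂.get (Fin.cast ((List.length_append : (l₁ ++ l₂).length = l₁.length + l₂.length)) i) := by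
          rw [h2, Fin.append_left]
  · have hi := i.isLt
    have hlen : (l₁ ++ l₂).length = l₁.length + l₂.length := (List.length_append : (l₁ ++ l₂).length = l₁.length + l₂.length)
    have hlt2 : i.val - l₁.length < l₂.length := by omega
    have h2 : Fin.cast ((List.length_append : (l₁ ++ l₂).length = l₁.length + l₂.length)) i =
        Fin.natAdd l₁.length ⟨i.val - l₁.length, hlt2⟩ :=
      Fin.ext (by simp only [Fin.coe_cast, Fin.coe_natAdd]; omega)
    calc (l₁ ++ l₂).get i = l₂.get ⟨i.val - l₁.length, hlt2⟩ := by
          simp only [List.get_eq_getElem]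
          exact List.getElem_append_right hge
      _ = Fin.append l₁.get l₂.get (Fin.cast ((List.length_append : (l₁ ++ l₂).length = l₁.length + l₂.length)) i) := by
          rw [h2, Fin.append_right]

theorem mval_coe_add (l₁ l₂ : List X) :
    mval M (↑l₁ + ↑l₂) = M (l₁.length + l₂.length) (Fin.append l₁.get l₂.get) := by
  rw [Multiset.coe_add, mval_coe hsym, Fval_append]

theorem mval_internal
    (hint : ∀ n k : ℕ, 0 < n → 0 < k → ∀ (x : Fin n → X) (y : Fin k → X),
      (min (M n x) (M k y) ≤ M (n + k) (Fin.append x y) ∧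
        M (n + k) (Fin.append x y) ≤ max (M n x) (M k y)) ∧
      (M n x ≠ M k y →
        min (M n x) (M k y) < M (n + k) (Fin.append x y) ∧
        M (n + k) (Fin.append x y) < max (M n x) (M k y)))
    {s u : Multiset X} (hs : s ≠ 0) (hu : u ≠ 0) :
    (min (mval M s) (mval M u) ≤ mval M (s + u) ∧
      mval M (s + u) ≤ max (mval M s) (mval M u)) ∧
    (mval M s ≠ mval M u →
      min (mval M s) (mval M u) < mval M (s + u) ∧
      mval M (s + u) < max (mval M s) (mval M u)) := by
  obtain ⟨l₁, rfl⟩ := exists_coe_rep s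
  obtain ⟨l₂, rfl⟩ := exists_coe_rep u
  have h₁ : 0 < l₁.length := List.length_pos_iff.2 (by simpa using hs)
  have h₂ : 0 < l₂.length := List.length_pos_iff.2 (by simpa using hu)
  rw [mval_coe_add hsym, mval_coe hsym, mval_coe hsym]
  exact hint _ _ h₁ h₂ l₁.get l₂.get

end bridge

private theorem coe_flatten_replicate : ∀ (k : ℕ) (x : Fin k → X) (n : ℕ),
    (↑((List.ofFn fun i : Fin k => List.replicate n (x i)).flatten) : Multiset X)
      = n • (↑(List.ofFn x) : Multiset X)
  | 0, x, n => by simp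
  | (k+1), x, n => by
    rw [List.ofFn_succ (f := fun i : Fin (k+1) => List.replicate n (x i)), List.flatten_cons,
      List.ofFn_succ (f := x), ← Multiset.coe_add]
    rw [coe_flatten_replicate k (fun i => x i.succ) n]
    rw [show ((↑(x 0 :: List.ofFn fun i : Fin k => x i.succ)) : Multiset X)
        = {x 0} + ↑(List.ofFn fun i : Fin k => x i.succ) by
      rw [← Multiset.cons_coe, ← Multiset.singleton_add]]
    rw [smul_add, Multiset.coe_replicate, ← Multiset.nsmul_singleton]

theorem coe_ofFn_repBlock {k n : ℕ} (x : Fin k → X) :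
    (↑(List.ofFn (repBlock n x)) : Multiset X) = n • ↑(List.ofFn x) := by
  have step1 : List.ofFn (repBlock n x) =
      (List.ofFn fun i : Fin k => List.replicate n (x i)).flatten := by
    rw [List.ofFn_mul]
    congr 1
    rw [List.ofFn_inj]
    funext i
    rw [← List.ofFn_const n (x i), List.ofFn_inj]
    funext j
    simp only [repBlock]
    congr 1
    apply Fin.ext
    show (↑i * n + ↑j) / n = ↑i
    have hn : 0 < n := j.pos
    rw [Nat.mul_comm, Nat.mul_add_div hn, Nat.div_eq_of_lt j.isLt]
    omega
  rw [step1]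
  exact coe_flatten_replicate k x n

section bridge2

variable (hsym : ∀ n : ℕ, 0 < n → ∀ (x : Fin n → X) (π : Equiv.Perm (Fin n)),
      M n (x ∘ π) = M n x)
include hsym

theorem tendsto_mval_idem
    (hai : ∀ k : ℕ, 0 < k → ∀ (x : Fin k → X) (y : X),
      Tendsto (fun n : ℕ =>
          M (k * n + 1) (Fin.append (repBlock n x) (fun _ : Fin 1 => y)))
        atTop (𝓝 (M k x)))
    {s : Multiset X} (hs : s ≠ 0) (y : X) :
    Tendsto (fun n : ℕ => mval M (n • s + {y})) atTop (𝓝 (mval M s)) := by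
  obtain ⟨l, rfl⟩ := exists_coe_rep s
  have hl : l ≠ [] := by simpa using hs
  have hk : 0 < l.length := List.length_pos_iff.2 hl
  have h0 := hai l.length hk l.get y
  have hM : M l.length l.get = mval M ↑l := by rw [mval_coe hsym]; rfl
  rw [hM] at h0
  apply h0.congr
  intro n
  rw [← mval_msOf hsym (Fin.append (repBlock n l.get) (fun _ : Fin 1 => y))]
  congr 1
  rw [List.ofFn_fin_append, ← Multiset.coe_add, coe_ofFn_repBlock, List.ofFn_get]
  simp

end bridge2
end ZC

namespace ZC
open Filter Topology

variable {X : Type*}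

/-- Core data: a symmetric strictly internal asymptotically idempotent mean on multisets. -/
structure CW (X : Type*) where
  m : Multiset X → ℝ
  min_le : ∀ {s u : Multiset X}, s ≠ 0 → u ≠ 0 → min (m s) (m u) ≤ m (s + u)
  le_max : ∀ {s u : Multiset X}, s ≠ 0 → u ≠ 0 → m (s + u) ≤ max (m s) (m u)
  min_lt : ∀ {s u : Multiset X}, s ≠ 0 → u ≠ 0 → m s ≠ m u → min (m s) (m u) < m (s + u)
  lt_max : ∀ {s u : Multiset X}, s ≠ 0 → u ≠ 0 → m s ≠ m u → m (s + u) < max (m s) (m u)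
  idem : ∀ {s : Multiset X}, s ≠ 0 → ∀ y : X,
    Filter.Tendsto (fun n : ℕ => m (n • s + {y})) Filter.atTop (nhds (m s))

namespace CW

variable (c : CW X)

theorem nsmul_ne_zero {s : Multiset X} (hs : s ≠ 0) {n : ℕ} (hn : 1 ≤ n) : n • s ≠ 0 := by
  intro h
  apply hs
  have hc := congrArg Multiset.card h
  rw [Multiset.card_nsmul, Multiset.card_zero] at hc
  rcases Nat.mul_eq_zero.1 hc with h' | h'
  · omega
  · exact Multiset.card_eq_zero.1 h'

theorem add_ne_zero {s u : Multiset X} (hs : s ≠ 0) : s + u ≠ 0 := by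
  intro h
  apply hs
  have hc := congrArg Multiset.card h
  rw [Multiset.card_add, Multiset.card_zero] at hc
  exact Multiset.card_eq_zero.1 (by omega)

theorem m_nsmul {s : Multiset X} (hs : s ≠ 0) : ∀ {n : ℕ}, 1 ≤ n → c.m (n • s) = c.m s := by
  intro n hn
  induction n with
  | zero => omega
  | succ k ih =>
    rcases Nat.eq_zero_or_pos k with hk | hk
    · subst hk; rw [one_nsmul]
    · have hks := ih hk
      rw [succ_nsmul]
      have h1 := c.min_le (nsmul_ne_zero hs hk) hs
      have h2 := c.le_max (nsmul_ne_zero hs hk) hs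
      rw [hks, min_self] at h1
      rw [hks, max_self] at h2
      linarith

section signs

variable {c}
variable {t : ℝ} {s u : Multiset X}

theorem add_le_le (hs : s ≠ 0) (hu : u ≠ 0) (h1 : c.m s ≤ t) (h2 : c.m u ≤ t) :
    c.m (s + u) ≤ t :=
  le_trans (c.le_max hs hu) (max_le h1 h2)

theorem add_lt_le (hs : s ≠ 0) (hu : u ≠ 0) (h1 : c.m s < t) (h2 : c.m u ≤ t) :
    c.m (s + u) < t := by
  rcases eq_or_ne (c.m s) (c.m u) with he | he
  · exact lt_of_le_of_lt (c.le_max hs hu) (by rw [← he, max_self]; exact h1)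
  · exact lt_of_lt_of_le (c.lt_max hs hu he) (max_le (le_of_lt h1) h2)

theorem add_le_lt (hs : s ≠ 0) (hu : u ≠ 0) (h1 : c.m s ≤ t) (h2 : c.m u < t) :
    c.m (s + u) < t := by
  rw [add_comm]; exact add_lt_le hu hs h2 h1

theorem add_ge_ge (hs : s ≠ 0) (hu : u ≠ 0) (h1 : t ≤ c.m s) (h2 : t ≤ c.m u) :
    t ≤ c.m (s + u) :=
  le_trans (le_min h1 h2) (c.min_le hs hu)

theorem add_gt_ge (hs : s ≠ 0) (hu : u ≠ 0) (h1 : t < c.m s) (h2 : t ≤ c.m u) :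
    t < c.m (s + u) := by
  rcases eq_or_ne (c.m s) (c.m u) with he | he
  · have h := c.min_le hs hu
    rw [← he, min_self] at h
    exact lt_of_lt_of_le h1 h
  · exact lt_of_le_of_lt (le_min (le_of_lt h1) h2) (c.min_lt hs hu he)

theorem add_ge_gt (hs : s ≠ 0) (hu : u ≠ 0) (h1 : t ≤ c.m s) (h2 : t < c.m u) :
    t < c.m (s + u) := by
  rw [add_comm]; exact add_gt_ge hu hs h2 h1

theorem add_eq_eq (hs : s ≠ 0) (hu : u ≠ 0) (h1 : c.m s = t) (h2 : c.m u = t) :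
    c.m (s + u) = t :=
  le_antisymm (add_le_le hs hu h1.le h2.le) (add_ge_ge hs hu h1.ge h2.ge)

end signs

theorem tendsto_half_sub : Filter.Tendsto (fun n : ℕ => n - n / 2) Filter.atTop Filter.atTop :=
  Filter.tendsto_atTop_atTop.2 fun b => ⟨2 * b + 2, fun n hn => by omega⟩

theorem tendsto_half : Filter.Tendsto (fun n : ℕ => n / 2) Filter.atTop Filter.atTop :=
  Filter.tendsto_atTop_atTop.2 fun b => ⟨2 * b + 2, fun n hn => by omega⟩

/-- key limit: replicating `s` and adding a fixed multiset tends to `m s`. -/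
theorem tendsto_nsmul_add {s : Multiset X} (hs : s ≠ 0) (C : Multiset X) :
    Filter.Tendsto (fun n : ℕ => c.m (n • s + C)) Filter.atTop (nhds (c.m s)) := by
  induction C using Multiset.induction with
  | empty =>
    have heq : (fun _ : ℕ => c.m s) =ᶠ[Filter.atTop] fun n : ℕ => c.m (n • s + 0) := by
      filter_upwards [Filter.eventually_ge_atTop 1] with n hn
      rw [add_zero, c.m_nsmul hs hn]
    exact Filter.Tendsto.congr' heq tendsto_const_nhds
  | cons a C' ih =>
    have h1 : Filter.Tendsto (fun n : ℕ => c.m ((n - n / 2) • s + C'))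
        Filter.atTop (nhds (c.m s)) := ih.comp tendsto_half_sub
    have h2 : Filter.Tendsto (fun n : ℕ => c.m ((n / 2) • s + {a}))
        Filter.atTop (nhds (c.m s)) := (c.idem hs a).comp tendsto_half
    have hmin := h1.min h2
    have hmax := h1.max h2
    rw [min_self] at hmin
    rw [max_self] at hmax
    apply tendsto_of_tendsto_of_tendsto_of_le_of_le' hmin hmax
    · filter_upwards [Filter.eventually_ge_atTop 2] with n hn
      have hsplit : n • s + (a ::ₘ C') = ((n - n / 2) • s + C') + ((n / 2) • s + {a}) := by
        rw [← Multiset.singleton_add]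
        have hn2 : (n - n / 2) + n / 2 = n := by omega
        calc n • s + ({a} + C') = ((n - n / 2) + n / 2) • s + ({a} + C') := by rw [hn2]
          _ = ((n - n / 2) • s + C') + ((n / 2) • s + {a}) := by
              rw [add_nsmul]; ac_rfl
      rw [hsplit]
      exact c.min_le (add_ne_zero (nsmul_ne_zero hs (by omega))) (add_ne_zero (nsmul_ne_zero hs (by omega)))
    · filter_upwards [Filter.eventually_ge_atTop 2] with n hn
      have hsplit : n • s + (a ::ₘ C') = ((n - n / 2) • s + C') + ((n / 2) • s + {a}) := by
        rw [← Multiset.singleton_add]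
        have hn2 : (n - n / 2) + n / 2 = n := by omega
        calc n • s + ({a} + C') = ((n - n / 2) + n / 2) • s + ({a} + C') := by rw [hn2]
          _ = ((n - n / 2) • s + C') + ((n / 2) • s + {a}) := by
              rw [add_nsmul]; ac_rfl
      rw [hsplit]
      exact c.le_max (add_ne_zero (nsmul_ne_zero hs (by omega))) (add_ne_zero (nsmul_ne_zero hs (by omega)))

end CW
end ZC

namespace ZC
namespace CW
open Filter Topology

variable {X : Type*} (c : CW X)

/-- `q` copies of `u` kill `p` copies of `S` at level `t`. -/
def kill (t : ℝ) (u : X) (S : Multiset X) (p q : ℕ) : Prop :=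
  c.m (p • S + q • ({u} : Multiset X)) ≤ t

/-- the killing threshold. -/
noncomputable def Q (t : ℝ) (u : X) (S : Multiset X) (p : ℕ) : ℕ :=
  sInf {q | c.kill t u S p q}

section Qtheory

variable {c}
variable {t : ℝ} {u : X} {S : Multiset X} {p : ℕ}

theorem kill_exists (hu : c.m {u} < t) (hS0 : S ≠ 0) (hp : 1 ≤ p) :
    ∃ q, c.kill t u S p q := by
  have h := c.tendsto_nsmul_add (s := ({u} : Multiset X)) (by simp) (p • S)
  obtain ⟨q, hq⟩ := (h.eventually_lt_const hu).exists
  exact ⟨q, by rw [kill, add_comm]; exact hq.le⟩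

theorem kill_succ (hu : c.m {u} < t) (hS0 : S ≠ 0) (hp : 1 ≤ p) {q : ℕ}
    (h : c.kill t u S p q) : c.kill t u S p (q + 1) := by
  rw [kill] at h ⊢
  have hrw : p • S + (q + 1) • ({u} : Multiset X) = (p • S + q • ({u} : Multiset X)) + {u} := by
    rw [add_nsmul, one_nsmul]; ac_rfl
  rw [hrw]
  exact (add_le_lt (add_ne_zero (nsmul_ne_zero hS0 hp)) (by simp) h hu).le

theorem kill_of_le (hu : c.m {u} < t) (hS0 : S ≠ 0) (hp : 1 ≤ p) {q q' : ℕ} (hqq : q ≤ q')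
    (h : c.kill t u S p q) : c.kill t u S p q' := by
  induction q' with
  | zero => simpa [show q = 0 by omega] using h
  | succ k ih =>
    rcases Nat.lt_or_ge k q with h1 | h1
    · simpa [show q = k + 1 by omega] using h
    · exact kill_succ hu hS0 hp (ih h1)

theorem kill_iff_Q_le (hu : c.m {u} < t) (hS0 : S ≠ 0) (hp : 1 ≤ p) {q : ℕ} :
    c.kill t u S p q ↔ c.Q t u S p ≤ q := by
  constructor
  · intro h; exact Nat.sInf_le h
  · intro h
    exact kill_of_le hu hS0 hp h (Nat.sInf_mem (kill_exists hu hS0 hp))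

theorem not_kill_iff (hu : c.m {u} < t) (hS0 : S ≠ 0) (hp : 1 ≤ p) {q : ℕ} :
    q < c.Q t u S p ↔ t < c.m (p • S + q • ({u} : Multiset X)) := by
  rw [lt_iff_not_ge, ← kill_iff_Q_le hu hS0 hp, kill, not_le]

theorem Q_pos (hu : c.m {u} < t) (hS : t < c.m S) (hS0 : S ≠ 0) (hp : 1 ≤ p) :
    1 ≤ c.Q t u S p := by
  have h : ¬ c.kill t u S p 0 := by
    rw [kill]
    simp only [zero_nsmul, add_zero]
    rw [c.m_nsmul hS0 hp]
    exact not_le.2 hS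
  rcases Nat.eq_zero_or_pos (c.Q t u S p) with h0 | h0
  · exact absurd ((kill_iff_Q_le hu hS0 hp).2 (le_of_eq h0)) h
  · exact h0

theorem kill_add {S₁ S₂ : Multiset X} {p₁ p₂ q₁ q₂ : ℕ}
    (h₁0 : S₁ ≠ 0) (h₂0 : S₂ ≠ 0) (hp₁ : 1 ≤ p₁) (hp₂ : 1 ≤ p₂)
    (h₁ : c.kill t u S₁ p₁ q₁) (h₂ : c.kill t u S₂ p₂ q₂) :
    c.m ((p₁ • S₁ + p₂ • S₂) + (q₁ + q₂) • ({u} : Multiset X)) ≤ t := by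
  have hrw : (p₁ • S₁ + p₂ • S₂) + (q₁ + q₂) • ({u} : Multiset X)
      = (p₁ • S₁ + q₁ • ({u} : Multiset X)) + (p₂ • S₂ + q₂ • ({u} : Multiset X)) := by
    rw [add_nsmul]; ac_rfl
  rw [hrw]
  exact add_le_le (add_ne_zero (nsmul_ne_zero h₁0 hp₁)) (add_ne_zero (nsmul_ne_zero h₂0 hp₂)) h₁ h₂

theorem surv_add {S₁ S₂ : Multiset X} {p₁ p₂ q₁ q₂ : ℕ}
    (h₁0 : S₁ ≠ 0) (h₂0 : S₂ ≠ 0) (hp₁ : 1 ≤ p₁) (hp₂ : 1 ≤ p₂)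
    (h₁ : t < c.m (p₁ • S₁ + q₁ • ({u} : Multiset X)))
    (h₂ : t < c.m (p₂ • S₂ + q₂ • ({u} : Multiset X))) :
    t < c.m ((p₁ • S₁ + p₂ • S₂) + (q₁ + q₂) • ({u} : Multiset X)) := by
  have hrw : (p₁ • S₁ + p₂ • S₂) + (q₁ + q₂) • ({u} : Multiset X)
      = (p₁ • S₁ + q₁ • ({u} : Multiset X)) + (p₂ • S₂ + q₂ • ({u} : Multiset X)) := by
    rw [add_nsmul]; ac_rfl
  rw [hrw]
  exact add_gt_ge (add_ne_zero (nsmul_ne_zero h₁0 hp₁)) (add_ne_zero (nsmul_ne_zero h₂0 hp₂)) h₁ h₂.le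

theorem kill_smul (hS0 : S ≠ 0) (hp : 1 ≤ p) {q : ℕ} {k : ℕ} (hk : 1 ≤ k)
    (h : c.kill t u S p q) : c.kill t u S (k * p) (k * q) := by
  induction k with
  | zero => omega
  | succ j ih =>
    rcases Nat.eq_zero_or_pos j with hj | hj
    · subst hj; simpa using h
    · have hkj := ih hj
      rw [kill] at hkj h ⊢
      have hrw : ((j + 1) * p) • S + ((j + 1) * q) • ({u} : Multiset X)
          = ((j * p) • S + (j * q) • ({u} : Multiset X)) + (p • S + q • ({u} : Multiset X)) := by
        rw [add_mul, one_mul, add_mul, one_mul, add_nsmul, add_nsmul]; ac_rfl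
      rw [hrw]
      exact add_le_le (add_ne_zero (nsmul_ne_zero hS0 (Nat.mul_pos hj hp)))
        (add_ne_zero (nsmul_ne_zero hS0 hp)) hkj h

theorem surv_smul (hS0 : S ≠ 0) (hp : 1 ≤ p) {q : ℕ} {k : ℕ} (hk : 1 ≤ k)
    (h : t < c.m (p • S + q • ({u} : Multiset X))) :
    t < c.m ((k * p) • S + (k * q) • ({u} : Multiset X)) := by
  induction k with
  | zero => omega
  | succ j ih =>
    rcases Nat.eq_zero_or_pos j with hj | hj
    · subst hj; simpa using h
    · have hkj := ih hj
      have hrw : ((j + 1) * p) • S + ((j + 1) * q) • ({u} : Multiset X)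
          = ((j * p) • S + (j * q) • ({u} : Multiset X)) + (p • S + q • ({u} : Multiset X)) := by
        rw [add_mul, one_mul, add_mul, one_mul, add_nsmul, add_nsmul]; ac_rfl
      rw [hrw]
      exact add_gt_ge (add_ne_zero (nsmul_ne_zero hS0 (Nat.mul_pos hj hp)))
        (add_ne_zero (nsmul_ne_zero hS0 hp)) hkj h.le

/-- cross inequality between thresholds at different replication levels. -/
theorem Q_cross (hu : c.m {u} < t) (hS : t < c.m S) (hS0 : S ≠ 0) {p₁ p₂ : ℕ}
    (hp₁ : 1 ≤ p₁) (hp₂ : 1 ≤ p₂) :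
    p₂ * c.Q t u S p₁ < p₁ * c.Q t u S p₂ + p₂ := by
  have hQ₁pos : 1 ≤ c.Q t u S p₁ := Q_pos hu hS hS0 hp₁
  obtain ⟨k, hk⟩ : ∃ k, c.Q t u S p₁ = k + 1 := ⟨c.Q t u S p₁ - 1, by omega⟩
  have hsurv : t < c.m (p₁ • S + k • ({u} : Multiset X)) :=
    (not_kill_iff hu hS0 hp₁).1 (by omega)
  have hkill : c.kill t u S p₂ (c.Q t u S p₂) := (kill_iff_Q_le hu hS0 hp₂).2 le_rfl
  by_contra hcon
  push_neg at hcon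
  rw [hk] at hcon
  have hexp : p₂ * (k + 1) = p₂ * k + p₂ := by ring
  have hge : p₁ * c.Q t u S p₂ ≤ p₂ * k := by omega
  have hsurv2 := surv_smul hS0 hp₁ hp₂ hsurv
  have hkill2 := kill_smul hS0 hp₂ hp₁ hkill
  have hkill3 := kill_of_le hu hS0 (Nat.mul_pos hp₁ hp₂) hge hkill2
  rw [kill, show p₁ * p₂ = p₂ * p₁ by ring] at hkill3
  exact absurd hkill3 (not_le.2 hsurv2)

end Qtheory
end CW
end ZC

namespace ZC
namespace CW
open Filter Topology

variable {X : Type*} (c : CW X)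

/-- the asymptotic kill-rate: `u`-units per copy of `S` needed to reach level `t`. -/
noncomputable def aw (t : ℝ) (u : X) (S : Multiset X) : ℝ :=
  sInf {r : ℝ | ∃ p : ℕ, 1 ≤ p ∧ r = (c.Q t u S p : ℝ) / p}

section awTheory

variable {c}
variable {t : ℝ} {u : X} {S : Multiset X}

theorem aw_set_nonempty : {r : ℝ | ∃ p : ℕ, 1 ≤ p ∧ r = (c.Q t u S p : ℝ) / p}.Nonempty :=
  ⟨(c.Q t u S 1 : ℝ) / 1, 1, le_rfl, by norm_num⟩

theorem aw_set_bddBelow : BddBelow {r : ℝ | ∃ p : ℕ, 1 ≤ p ∧ r = (c.Q t u S p : ℝ) / p} := by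
  refine ⟨0, fun r hr => ?_⟩
  obtain ⟨p, hp, rfl⟩ := hr
  positivity

theorem aw_nonneg : 0 ≤ c.aw t u S :=
  le_csInf aw_set_nonempty (fun r hr => by obtain ⟨p, hp, rfl⟩ := hr; positivity)

theorem aw_le (p : ℕ) (hp : 1 ≤ p) : c.aw t u S ≤ (c.Q t u S p : ℝ) / p :=
  csInf_le aw_set_bddBelow ⟨p, hp, rfl⟩

theorem le_aw (hu : c.m {u} < t) (hS : t < c.m S) (hS0 : S ≠ 0) (p : ℕ) (hp : 1 ≤ p) :
    ((c.Q t u S p : ℝ) - 1) / p ≤ c.aw t u S := by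
  apply le_csInf aw_set_nonempty
  rintro r ⟨p', hp', rfl⟩
  have hcross := Q_cross hu hS hS0 hp hp'
  rw [div_le_div_iff₀ (by positivity) (by positivity)]
  have h1 : (↑(p' * c.Q t u S p) : ℝ) < ↑(p * c.Q t u S p' + p') := by exact_mod_cast hcross
  push_cast at h1 ⊢
  nlinarith [h1]

theorem aw_bounds (hu : c.m {u} < t) (hS : t < c.m S) (hS0 : S ≠ 0) (p : ℕ) (hp : 1 ≤ p) :
    (p : ℝ) * c.aw t u S ≤ c.Q t u S p ∧ (c.Q t u S p : ℝ) ≤ p * c.aw t u S + 1 := by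
  have hppos : (0:ℝ) < p := by exact_mod_cast hp
  constructor
  · have := aw_le (c := c) (t := t) (u := u) (S := S) p hp
    rw [le_div_iff₀ hppos] at this
    linarith
  · have := le_aw hu hS hS0 p hp
    rw [div_le_iff₀ hppos] at this
    linarith

/-- helper: `x ≤ y` if `x ≤ y + 3/p` for all `p ≥ 1`. -/
theorem le_of_forall_le_add_three {x y : ℝ} (h : ∀ p : ℕ, 1 ≤ p → x ≤ y + 3 / p) : x ≤ y := by
  by_contra hcon
  push_neg at hcon
  obtain ⟨p, hp⟩ := exists_nat_gt (3 / (x - y))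
  have hppos : 1 ≤ p := by
    by_contra h0
    have : p = 0 := by omega
    rw [this] at hp
    norm_num at hp
    nlinarith [div_pos (by norm_num : (0:ℝ) < 3) (by linarith : 0 < x - y)]
  have h3 := h p hppos
  have hppos' : (0:ℝ) < p := by exact_mod_cast hppos
  have : 3 / (p:ℝ) < x - y := by
    rw [div_lt_iff₀ hppos']
    rw [div_lt_iff₀ (by linarith : (0:ℝ) < x - y)] at hp
    nlinarith
  linarith

theorem aw_pos (hu : c.m {u} < t) (hS : t < c.m S) (hS0 : S ≠ 0) : 0 < c.aw t u S := by
  obtain ⟨p, hp1, hp⟩ : ∃ p : ℕ, 1 ≤ p ∧ t < c.m (p • S + ({u} : Multiset X)) := by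
    have h := c.tendsto_nsmul_add hS0 ({u} : Multiset X)
    have h2 := (h.eventually_const_lt hS).and (eventually_ge_atTop 1)
    obtain ⟨p, hp1, hp2⟩ := h2.exists
    exact ⟨p, hp2, hp1⟩
  have hsurv : 1 < c.Q t u S p := by
    rw [not_kill_iff hu hS0 hp1]  -- careful: gives iff for q < Q
    rw [one_nsmul]
    exact hp
  have hb := le_aw hu hS hS0 p hp1
  have hppos : (0:ℝ) < p := by exact_mod_cast hp1
  have h2 : (0:ℝ) < ((c.Q t u S p : ℝ) - 1) / p := by
    apply div_pos _ hppos
    have : (2:ℝ) ≤ c.Q t u S p := by exact_mod_cast hsurv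
    linarith
  linarith

theorem Q_add_le (hu : c.m {u} < t) {S₁ S₂ : Multiset X} (h₁0 : S₁ ≠ 0) (h₂0 : S₂ ≠ 0)
    (p : ℕ) (hp : 1 ≤ p) :
    c.Q t u (S₁ + S₂) p ≤ c.Q t u S₁ p + c.Q t u S₂ p := by
  rw [← kill_iff_Q_le hu (add_ne_zero h₁0) hp]
  have h₁ : c.kill t u S₁ p (c.Q t u S₁ p) := (kill_iff_Q_le hu h₁0 hp).2 le_rfl
  have h₂ : c.kill t u S₂ p (c.Q t u S₂ p) := (kill_iff_Q_le hu h₂0 hp).2 le_rfl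
  have h3 := kill_add h₁0 h₂0 hp hp h₁ h₂
  rw [kill, smul_add]
  exact h3

theorem Q_add_ge (hu : c.m {u} < t) {S₁ S₂ : Multiset X} (h₁0 : S₁ ≠ 0) (h₂0 : S₂ ≠ 0)
    (hS₁ : t < c.m S₁) (hS₂ : t < c.m S₂) (p : ℕ) (hp : 1 ≤ p) :
    c.Q t u S₁ p + c.Q t u S₂ p ≤ c.Q t u (S₁ + S₂) p + 1 := by
  have hQ₁ : 1 ≤ c.Q t u S₁ p := Q_pos hu hS₁ h₁0 hp
  have hQ₂ : 1 ≤ c.Q t u S₂ p := Q_pos hu hS₂ h₂0 hp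
  obtain ⟨k₁, hk₁⟩ : ∃ k, c.Q t u S₁ p = k + 1 := ⟨c.Q t u S₁ p - 1, by omega⟩
  obtain ⟨k₂, hk₂⟩ : ∃ k, c.Q t u S₂ p = k + 1 := ⟨c.Q t u S₂ p - 1, by omega⟩
  have hs₁ : t < c.m (p • S₁ + k₁ • ({u} : Multiset X)) :=
    (not_kill_iff hu h₁0 hp).1 (by omega)
  have hs₂ : t < c.m (p • S₂ + k₂ • ({u} : Multiset X)) :=
    (not_kill_iff hu h₂0 hp).1 (by omega)
  have hsum := surv_add h₁0 h₂0 hp hp hs₁ hs₂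
  have : k₁ + k₂ < c.Q t u (S₁ + S₂) p := by
    rw [not_kill_iff hu (add_ne_zero h₁0) hp, smul_add]
    exact hsum
  omega

theorem aw_add (hu : c.m {u} < t) {S₁ S₂ : Multiset X} (h₁0 : S₁ ≠ 0) (h₂0 : S₂ ≠ 0)
    (hS₁ : t < c.m S₁) (hS₂ : t < c.m S₂) :
    c.aw t u (S₁ + S₂) = c.aw t u S₁ + c.aw t u S₂ := by
  have hS₁₂ : t < c.m (S₁ + S₂) := add_gt_ge h₁0 h₂0 hS₁ hS₂.le
  apply le_antisymm
  · apply le_of_forall_le_add_three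
    intro p hp
    have hppos : (0:ℝ) < p := by exact_mod_cast hp
    have h1 := (aw_bounds hu hS₁₂ (add_ne_zero h₁0) p hp).1
    have h2 := (aw_bounds hu hS₁ h₁0 p hp).2
    have h3 := (aw_bounds hu hS₂ h₂0 p hp).2
    have h4 : (c.Q t u (S₁ + S₂) p : ℝ) ≤ (c.Q t u S₁ p : ℝ) + (c.Q t u S₂ p : ℝ) := by
      exact_mod_cast Q_add_le hu h₁0 h₂0 p hp
    have hdp : (3 / (p:ℝ)) * p = 3 := div_mul_cancel₀ _ (ne_of_gt hppos)
    nlinarith [h1, h2, h3, h4, hdp, hppos]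
  · apply le_of_forall_le_add_three
    intro p hp
    have hppos : (0:ℝ) < p := by exact_mod_cast hp
    have h1 := (aw_bounds hu hS₁₂ (add_ne_zero h₁0) p hp).2
    have h2 := (aw_bounds hu hS₁ h₁0 p hp).1
    have h3 := (aw_bounds hu hS₂ h₂0 p hp).1
    have h4 : (c.Q t u S₁ p : ℝ) + (c.Q t u S₂ p : ℝ) ≤ (c.Q t u (S₁ + S₂) p : ℝ) + 1 := by
      exact_mod_cast Q_add_ge hu h₁0 h₂0 hS₁ hS₂ p hp
    have hdp : (3 / (p:ℝ)) * p = 3 := div_mul_cancel₀ _ (ne_of_gt hppos)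
    nlinarith [h1, h2, h3, h4, hdp, hppos]


theorem Q_insens (hu : c.m {u} < t) (hS0 : S ≠ 0) {S₀ : Multiset X} (hS₀0 : S₀ ≠ 0)
    (hZ : c.m S₀ = t) {p : ℕ} (hp : 1 ≤ p) :
    c.Q t u (S + S₀) p = c.Q t u S p := by
  have hiden : ∀ q : ℕ, p • (S + S₀) + q • ({u} : Multiset X)
      = (p • S + q • ({u} : Multiset X)) + p • S₀ := by
    intro q; rw [smul_add]; abel
  have hset : {q | c.kill t u (S + S₀) p q} = {q | c.kill t u S p q} := by
    ext q
    simp only [Set.mem_setOf_eq, kill]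
    rw [hiden q]
    constructor
    · intro h
      by_contra hcon
      push_neg at hcon
      have := add_gt_ge (add_ne_zero (nsmul_ne_zero hS0 hp)) (nsmul_ne_zero hS₀0 hp)
        hcon (le_of_eq (by rw [c.m_nsmul hS₀0 hp, hZ]))
      exact absurd h (not_le.2 this)
    · intro h
      exact add_le_le (add_ne_zero (nsmul_ne_zero hS0 hp)) (nsmul_ne_zero hS₀0 hp) h
        (le_of_eq (by rw [c.m_nsmul hS₀0 hp, hZ]))
  rw [Q, Q, hset]

theorem aw_insens (hu : c.m {u} < t) (hS0 : S ≠ 0) {S₀ : Multiset X} (hS₀0 : S₀ ≠ 0)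
    (hZ : c.m S₀ = t) : c.aw t u (S + S₀) = c.aw t u S := by
  rw [aw, aw]
  congr 1
  ext r
  constructor
  · rintro ⟨p, hp, rfl⟩; exact ⟨p, hp, by rw [Q_insens hu hS0 hS₀0 hZ hp]⟩
  · rintro ⟨p, hp, rfl⟩; exact ⟨p, hp, by rw [Q_insens hu hS0 hS₀0 hZ hp]⟩

theorem nsmul_singleton_ne_zero {v : X} {L : ℕ} (hL : 1 ≤ L) :
    (L • ({v} : Multiset X)) ≠ 0 :=
  nsmul_ne_zero (by simp) hL

theorem aw_add_smul_singleton (hu : c.m {u} < t) (hS : t < c.m S) (hS0 : S ≠ 0) {v : X}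
    (hv : t < c.m {v}) : ∀ L : ℕ, c.aw t u (S + L • ({v} : Multiset X))
      = c.aw t u S + L * c.aw t u {v} := by
  intro L
  induction L with
  | zero => simp
  | succ k ih =>
    have hk : S + (k + 1) • ({v} : Multiset X) = (S + k • ({v} : Multiset X)) + {v} := by
      rw [add_nsmul, one_nsmul]; ac_rfl
    have hmem : t < c.m (S + k • ({v} : Multiset X)) := by
      rcases Nat.eq_zero_or_pos k with h0 | h0
      · simpa [h0] using hS
      · have hvk : c.m (k • ({v} : Multiset X)) = c.m {v} :=
          c.m_nsmul (by simp) h0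
        exact add_gt_ge hS0 (nsmul_singleton_ne_zero (v := v) h0) hS (by rw [hvk]; exact hv.le)
    rw [hk, aw_add hu (add_ne_zero hS0) (by simp) hmem hv, ih]
    push_cast
    ring

theorem aw_smul_singleton (hu : c.m {u} < t) {v : X} (hv : t < c.m {v}) (L : ℕ) (hL : 1 ≤ L) :
    c.aw t u (L • ({v} : Multiset X)) = L * c.aw t u {v} := by
  obtain ⟨k, rfl⟩ : ∃ k, L = k + 1 := ⟨L - 1, by omega⟩
  have h1 : (k + 1) • ({v} : Multiset X) = ({v} : Multiset X) + k • {v} := by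
    rw [add_nsmul, one_nsmul]; ac_rfl
  rw [h1, aw_add_smul_singleton hu hv (by simp) hv k]
  push_cast
  ring

theorem Q_anti {t' : ℝ} (hu : c.m {u} < t) (hS0 : S ≠ 0) {p : ℕ} (hp : 1 ≤ p)
    (htt' : t ≤ t') : c.Q t' u S p ≤ c.Q t u S p := by
  apply Nat.sInf_le
  have h := (kill_iff_Q_le hu hS0 hp).2 (le_refl (c.Q t u S p))
  exact le_trans h htt'

theorem aw_anti {t' : ℝ} (hu : c.m {u} < t) (hS0 : S ≠ 0) (htt' : t ≤ t') :
    c.aw t' u S ≤ c.aw t u S := by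
  apply le_csInf aw_set_nonempty
  rintro r ⟨p, hp, rfl⟩
  refine le_trans (aw_le p hp) ?_
  have hQ : (c.Q t' u S p : ℝ) ≤ (c.Q t u S p : ℝ) := by
    exact_mod_cast Q_anti hu hS0 hp htt'
  have hppos : (0:ℝ) < p := by exact_mod_cast hp
  rw [div_le_div_iff₀ hppos hppos]
  nlinarith [hQ, hppos]

theorem aw_cont (hu : c.m {u} < t) (hS : t < c.m S) (hS0 : S ≠ 0) {ε : ℝ} (hε : 0 < ε) :
    ∃ δ > 0, ∀ t' : ℝ, |t' - t| < δ → |c.aw t' u S - c.aw t u S| ≤ ε := by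
  obtain ⟨p, hp1, hpε⟩ : ∃ p : ℕ, 1 ≤ p ∧ 2 / (p:ℝ) ≤ ε := by
    obtain ⟨p, hp⟩ := exists_nat_gt (2 / ε)
    have h2ε : 0 < 2 / ε := by positivity
    have hp1 : 1 ≤ p := by
      by_contra h0
      have : p = 0 := by omega
      rw [this] at hp
      norm_num at hp
      linarith
    have hppos : (0:ℝ) < p := by exact_mod_cast hp1
    refine ⟨p, hp1, ?_⟩
    rw [div_le_iff₀ hppos]
    rw [div_lt_iff₀ hε] at hp
    nlinarith
  have hppos : (0:ℝ) < p := by exact_mod_cast hp1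
  have hQpos : 1 ≤ c.Q t u S p := Q_pos hu hS hS0 hp1
  obtain ⟨k, hk⟩ : ∃ k, c.Q t u S p = k + 1 := ⟨c.Q t u S p - 1, by omega⟩
  set A := c.m (p • S + k • ({u} : Multiset X)) with hA
  have hAgt : t < A := (not_kill_iff hu hS0 hp1).1 (by omega)
  have hAle : A ≤ c.m S := by
    rcases Nat.eq_zero_or_pos k with hk0 | hk0
    · rw [hA, hk0, zero_nsmul, add_zero, c.m_nsmul hS0 hp1]
    · have h := c.le_max (nsmul_ne_zero hS0 hp1) (nsmul_singleton_ne_zero (v := u) hk0)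
      rw [c.m_nsmul hS0 hp1, c.m_nsmul (by simp) hk0,
        max_eq_left (le_of_lt (lt_trans hu hS))] at h
      exact h
  set B := c.m (p • S + (c.Q t u S p + 1) • ({u} : Multiset X)) with hB
  have hkill : c.kill t u S p (c.Q t u S p) := (kill_iff_Q_le hu hS0 hp1).2 le_rfl
  have hBlt : B < t := by
    have hrw : p • S + (c.Q t u S p + 1) • ({u} : Multiset X)
        = (p • S + (c.Q t u S p) • ({u} : Multiset X)) + {u} := by
      rw [add_nsmul, one_nsmul]; ac_rfl
    rw [hB, hrw]
    exact add_le_lt (add_ne_zero (nsmul_ne_zero hS0 hp1)) (by simp) hkill hu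
  have hBgt : c.m {u} < B := by
    have hQ1 : 1 ≤ c.Q t u S p + 1 := Nat.le_add_left 1 _
    have h := c.min_lt (nsmul_ne_zero hS0 hp1) (nsmul_singleton_ne_zero (v := u) hQ1)
      (by rw [c.m_nsmul hS0 hp1, c.m_nsmul (s := ({u} : Multiset X)) (by simp) hQ1]
          exact ne_of_gt (lt_trans hu hS))
    rw [c.m_nsmul hS0 hp1, c.m_nsmul (s := ({u} : Multiset X)) (by simp) hQ1,
      min_eq_right (le_of_lt (lt_trans hu hS))] at h
    exact h
  refine ⟨min (A - t) (t - B), lt_min (sub_pos.2 hAgt) (sub_pos.2 hBlt), ?_⟩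
  intro t' ht'
  have habs := abs_lt.1 ht'
  have h1 : t' < A := by
    have := lt_of_lt_of_le habs.2 (min_le_left _ _)
    linarith
  have h2 : B < t' := by
    have h3 := min_le_right (A - t) (t - B)
    linarith [habs.1]
  have hεp : 2 ≤ ε * p := by
    rw [div_le_iff₀ hppos] at hpε
    linarith
  rcases le_or_gt t t' with hcase | hcase
  · have hu' : c.m {u} < t' := lt_of_lt_of_le hu hcase
    have hS' : t' < c.m S := lt_of_lt_of_le h1 hAle
    have hanti : c.aw t' u S ≤ c.aw t u S := aw_anti hu hS0 hcase
    have hsurvt' : k < c.Q t' u S p := by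
      rw [not_kill_iff hu' hS0 hp1, ← hA]
      exact h1
    have hQ : (c.Q t u S p : ℝ) ≤ (c.Q t' u S p : ℝ) := by
      exact_mod_cast by omega
    have hb1 := le_aw hu' hS' hS0 p hp1
    have hb2 := (aw_bounds hu hS hS0 p hp1).1
    rw [div_le_iff₀ hppos] at hb1
    rw [abs_le]
    constructor
    · nlinarith [hb1, hb2, hQ, hεp, hppos]
    · linarith [hanti, hε.le]
  · have hu' : c.m {u} < t' := lt_trans hBgt h2
    have hS' : t' < c.m S := lt_trans hcase hS
    have hanti : c.aw t u S ≤ c.aw t' u S := aw_anti hu' hS0 hcase.le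
    have hkillt' : c.kill t' u S p (c.Q t u S p + 1) := by
      rw [kill, ← hB]; exact h2.le
    have hQ : (c.Q t' u S p : ℝ) ≤ (c.Q t u S p : ℝ) + 1 := by
      exact_mod_cast (kill_iff_Q_le hu' hS0 hp1).1 hkillt'
    have hb1 := aw_le (c := c) (t := t') (u := u) (S := S) p hp1
    have hb2 := (aw_bounds hu hS hS0 p hp1).2
    rw [le_div_iff₀ hppos] at hb1
    rw [abs_le]
    constructor
    · linarith [hanti, hε.le]
    · nlinarith [hb1, hb2, hQ, hεp, hppos]

end awTheory
end CW
end ZC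

namespace ZC
namespace CW
open Filter Topology

variable {X : Type*} (c : CW X)

open scoped Classical in
/-- the signed weight functional at level `t` with unit `u`. -/
noncomputable def w (t : ℝ) (u : X) (S : Multiset X) : ℝ :=
  if h : ∃ vL : X × ℕ, t < c.m {vL.1} ∧ 1 ≤ vL.2 ∧ t < c.m (S + vL.2 • ({vL.1} : Multiset X))
  then c.aw t u (S + h.choose.2 • ({h.choose.1} : Multiset X))
      - h.choose.2 * c.aw t u {h.choose.1}
  else 0

section wTheory

variable {c}
variable {t : ℝ} {u : X} {S : Multiset X}

theorem add_ne_zero' {s v : Multiset X} (hv : v ≠ 0) : s + v ≠ 0 := by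
  rw [add_comm]; exact add_ne_zero hv

theorem L_exists {v : X} (hv : t < c.m {v}) (S : Multiset X) :
    ∃ L : ℕ, 1 ≤ L ∧ t < c.m (S + L • ({v} : Multiset X)) := by
  rcases eq_or_ne S 0 with rfl | hS0
  · exact ⟨1, le_rfl, by simpa using hv⟩
  · have h := c.tendsto_nsmul_add (s := ({v} : Multiset X)) (by simp) S
    obtain ⟨L, hL1, hL2⟩ := ((h.eventually_const_lt hv).and (eventually_ge_atTop 1)).exists
    exact ⟨L, hL2, by rw [add_comm]; exact hL1⟩

theorem w_indep (hu : c.m {u} < t) {v₁ v₂ : X} {L₁ L₂ : ℕ}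
    (hv₁ : t < c.m {v₁}) (hL₁ : 1 ≤ L₁) (h₁ : t < c.m (S + L₁ • ({v₁} : Multiset X)))
    (hv₂ : t < c.m {v₂}) (hL₂ : 1 ≤ L₂) (h₂ : t < c.m (S + L₂ • ({v₂} : Multiset X))) :
    c.aw t u (S + L₁ • ({v₁} : Multiset X)) - L₁ * c.aw t u {v₁}
      = c.aw t u (S + L₂ • ({v₂} : Multiset X)) - L₂ * c.aw t u {v₂} := by
  have hne₁ : S + L₁ • ({v₁} : Multiset X) ≠ 0 := add_ne_zero' (nsmul_singleton_ne_zero hL₁)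
  have hne₂ : S + L₂ • ({v₂} : Multiset X) ≠ 0 := add_ne_zero' (nsmul_singleton_ne_zero hL₂)
  have e₁ := aw_add_smul_singleton hu h₁ hne₁ hv₂ L₂
  have e₂ := aw_add_smul_singleton hu h₂ hne₂ hv₁ L₁
  have hiden : (S + L₁ • ({v₁} : Multiset X)) + L₂ • ({v₂} : Multiset X)
      = (S + L₂ • ({v₂} : Multiset X)) + L₁ • ({v₁} : Multiset X) := by abel
  rw [hiden] at e₁
  rw [e₂] at e₁
  linarith

theorem w_eq (hu : c.m {u} < t) {v : X} {L : ℕ}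
    (hv : t < c.m {v}) (hL : 1 ≤ L) (h : t < c.m (S + L • ({v} : Multiset X))) :
    c.w t u S = c.aw t u (S + L • ({v} : Multiset X)) - L * c.aw t u {v} := by
  have hcond : ∃ vL : X × ℕ, t < c.m {vL.1} ∧ 1 ≤ vL.2 ∧
      t < c.m (S + vL.2 • ({vL.1} : Multiset X)) := ⟨(v, L), hv, hL, h⟩
  rw [w, dif_pos hcond]
  obtain ⟨hv', hL', h'⟩ := hcond.choose_spec
  exact w_indep hu hv' hL' h' hv hL h

theorem w_empty (hu : c.m {u} < t) (hex : ∃ v : X, t < c.m {v}) : c.w t u 0 = 0 := by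
  obtain ⟨v, hv⟩ := hex
  have h : t < c.m ((0 : Multiset X) + 1 • ({v} : Multiset X)) := by simpa using hv
  rw [w_eq hu hv le_rfl h]
  have h1 : (0 : Multiset X) + 1 • ({v} : Multiset X) = {v} := by simp
  rw [h1]
  push_cast
  ring

theorem w_add (hu : c.m {u} < t) (hex : ∃ v : X, t < c.m {v}) (S₁ S₂ : Multiset X) :
    c.w t u (S₁ + S₂) = c.w t u S₁ + c.w t u S₂ := by
  obtain ⟨v, hv⟩ := hex
  obtain ⟨L₁, hL₁, h₁⟩ := L_exists hv S₁
  obtain ⟨L₂, hL₂, h₂⟩ := L_exists hv S₂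
  have hne₁ : S₁ + L₁ • ({v} : Multiset X) ≠ 0 := add_ne_zero' (nsmul_singleton_ne_zero hL₁)
  have hne₂ : S₂ + L₂ • ({v} : Multiset X) ≠ 0 := add_ne_zero' (nsmul_singleton_ne_zero hL₂)
  have hiden : (S₁ + S₂) + (L₁ + L₂) • ({v} : Multiset X)
      = (S₁ + L₁ • ({v} : Multiset X)) + (S₂ + L₂ • ({v} : Multiset X)) := by
    rw [add_nsmul]; abel
  have hsum : t < c.m ((S₁ + S₂) + (L₁ + L₂) • ({v} : Multiset X)) := by
    rw [hiden]
    exact add_gt_ge hne₁ hne₂ h₁ h₂.le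
  rw [w_eq hu hv (by omega) hsum, w_eq hu hv hL₁ h₁, w_eq hu hv hL₂ h₂, hiden,
    aw_add hu hne₁ hne₂ h₁ h₂]
  push_cast
  ring

theorem w_smul (hu : c.m {u} < t) (hex : ∃ v : X, t < c.m {v}) (S : Multiset X) (k : ℕ) :
    c.w t u (k • S) = k * c.w t u S := by
  induction k with
  | zero => simpa using w_empty hu hex
  | succ j ih =>
    rw [succ_nsmul, w_add hu hex, ih]
    push_cast
    ring

theorem w_eq_aw (hu : c.m {u} < t) (hex : ∃ v : X, t < c.m {v})
    (hS : t < c.m S) (hS0 : S ≠ 0) : c.w t u S = c.aw t u S := by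
  obtain ⟨v, hv⟩ := hex
  obtain ⟨L, hL, h⟩ := L_exists hv S
  rw [w_eq hu hv hL h, aw_add_smul_singleton hu hS hS0 hv L]
  ring

theorem w_pos (hu : c.m {u} < t) (hex : ∃ v : X, t < c.m {v})
    (hS : t < c.m S) (hS0 : S ≠ 0) : 0 < c.w t u S := by
  rw [w_eq_aw hu hex hS hS0]
  exact aw_pos hu hS hS0

theorem w_zclass (hu : c.m {u} < t) (hex : ∃ v : X, t < c.m {v})
    (hS : c.m S = t) (hS0 : S ≠ 0) : c.w t u S = 0 := by
  obtain ⟨v, hv⟩ := hex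
  have h : t < c.m (S + 1 • ({v} : Multiset X)) := by
    rw [one_nsmul]
    exact add_ge_gt hS0 (by simp) hS.ge hv
  rw [w_eq hu hv le_rfl h]
  have hiden : S + 1 • ({v} : Multiset X) = ({v} : Multiset X) + S := by
    rw [one_nsmul]; abel
  rw [hiden, aw_insens hu (by simp) hS0 hS]
  push_cast
  ring

theorem le_of_forall_le_add_div {x y C : ℝ} (hC : 0 < C)
    (h : ∀ p : ℕ, 1 ≤ p → x ≤ y + C / p) : x ≤ y := by
  by_contra hcon
  push_neg at hcon
  obtain ⟨p, hp⟩ := exists_nat_gt (C / (x - y))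
  have hp1 : 1 ≤ p := by
    by_contra h0
    have hp0 : p = 0 := by omega
    rw [hp0] at hp
    norm_num at hp
    nlinarith [div_pos hC (by linarith : (0:ℝ) < x - y)]
  have hppos : (0:ℝ) < p := by exact_mod_cast hp1
  have h3 := h p hp1
  rw [div_lt_iff₀ (by linarith : (0:ℝ) < x - y)] at hp
  have : C / (p:ℝ) < x - y := by
    rw [div_lt_iff₀ hppos]
    nlinarith
  linarith

theorem aw_add_nonpos (hu : c.m {u} < t) {T : Multiset X} (hT : t < c.m T) (hT0 : T ≠ 0)
    (hS : c.m S ≤ t) (hS0 : S ≠ 0) : c.aw t u (S + T) ≤ c.aw t u T := by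
  apply le_of_forall_le_add_three
  intro p hp
  have hppos : (0:ℝ) < p := by exact_mod_cast hp
  have hkillT : c.kill t u T p (c.Q t u T p) := (kill_iff_Q_le hu hT0 hp).2 le_rfl
  have htrans : c.kill t u (S + T) p (c.Q t u T p) := by
    rw [kill] at hkillT ⊢
    have hiden : p • (S + T) + (c.Q t u T p) • ({u} : Multiset X)
        = (p • T + (c.Q t u T p) • ({u} : Multiset X)) + p • S := by
      rw [smul_add]; abel
    rw [hiden]
    exact add_le_le (add_ne_zero (nsmul_ne_zero hT0 hp)) (nsmul_ne_zero hS0 hp) hkillT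
      (by rw [c.m_nsmul hS0 hp]; exact hS)
  have hQ : c.Q t u (S + T) p ≤ c.Q t u T p := Nat.sInf_le htrans
  have h1 := aw_le (c := c) (t := t) (u := u) (S := S + T) p hp
  have h2 := (aw_bounds hu hT hT0 p hp).2
  have hQr : (c.Q t u (S + T) p : ℝ) ≤ (c.Q t u T p : ℝ) := by exact_mod_cast hQ
  have hd3 : (3 / (p:ℝ)) * p = 3 := div_mul_cancel₀ _ (ne_of_gt hppos)
  rw [le_div_iff₀ hppos] at h1
  nlinarith [h1, h2, hQr, hppos, hd3]

theorem w_nonpos (hu : c.m {u} < t) (hex : ∃ v : X, t < c.m {v})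
    (hS : c.m S ≤ t) (hS0 : S ≠ 0) : c.w t u S ≤ 0 := by
  obtain ⟨v, hv⟩ := hex
  obtain ⟨L, hL, h⟩ := L_exists hv S
  rw [w_eq hu hv hL h]
  have hTv : t < c.m (L • ({v} : Multiset X)) := by
    rw [c.m_nsmul (by simp) hL]; exact hv
  have h1 : c.aw t u (S + L • ({v} : Multiset X)) ≤ c.aw t u (L • ({v} : Multiset X)) :=
    aw_add_nonpos hu hTv (nsmul_singleton_ne_zero hL) hS hS0
  rw [aw_smul_singleton hu hv L hL] at h1
  linarith

theorem w_nonneg (hu : c.m {u} < t) (hex : ∃ v : X, t < c.m {v})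
    (hS : t ≤ c.m S) (hS0 : S ≠ 0) : 0 ≤ c.w t u S := by
  rcases eq_or_lt_of_le hS with heq | hlt
  · rw [w_zclass hu hex heq.symm hS0]
  · exact (w_pos hu hex hlt hS0).le

theorem w_neg (hu : c.m {u} < t) (hex : ∃ v : X, t < c.m {v})
    (hS : c.m S < t) (hS0 : S ≠ 0) : c.w t u S < 0 := by
  obtain ⟨v, hv⟩ := hex
  obtain ⟨K, hKs, hK1⟩ := (((c.idem hS0 v).eventually_lt_const hS).and
    (eventually_ge_atTop 1)).exists
  have hW0 : K • S + ({v} : Multiset X) ≠ 0 := add_ne_zero' (by simp)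
  have h1 : c.w t u (K • S + {v}) ≤ 0 := w_nonpos hu ⟨v, hv⟩ hKs.le hW0
  rw [w_add hu ⟨v, hv⟩, w_smul hu ⟨v, hv⟩] at h1
  have h2 : c.w t u {v} = c.aw t u {v} := w_eq_aw hu ⟨v, hv⟩ hv (by simp)
  have h3 : 0 < c.aw t u {v} := aw_pos hu hv (by simp)
  have hKpos : (0:ℝ) < K := by exact_mod_cast hK1
  nlinarith [h1, h2, h3, hKpos]

theorem w_scale (hu : c.m {u} < t) {u' : X} (hu' : c.m {u'} < t)
    (hex : ∃ v : X, t < c.m {v}) (S : Multiset X) :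
    c.w t u S = (- c.w t u {u'}) * c.w t u' S := by
  have hκpos : 0 < - c.w t u {u'} := by
    have := w_neg hu hex hu' (by simp)
    linarith
  have hP : ∀ T : Multiset X, T ≠ 0 → t < c.m T → c.w t u T = (- c.w t u {u'}) * c.w t u' T := by
    intro T hT0 hT
    rw [w_eq_aw hu' hex hT hT0]
    apply le_antisymm
    · apply le_of_forall_le_add_div hκpos
      intro p hp
      have hppos : (0:ℝ) < p := by exact_mod_cast hp
      have hkill : c.kill t u' T p (c.Q t u' T p) := (kill_iff_Q_le hu' hT0 hp).2 le_rfl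
      have h0 : c.w t u (p • T + (c.Q t u' T p) • ({u'} : Multiset X)) ≤ 0 :=
        w_nonpos hu hex hkill (add_ne_zero (nsmul_ne_zero hT0 hp))
      rw [w_add hu hex, w_smul hu hex, w_smul hu hex] at h0
      have hb := (aw_bounds hu' hT hT0 p hp).2
      have hdp : ((- c.w t u {u'}) / p) * p = - c.w t u {u'} :=
        div_mul_cancel₀ _ (ne_of_gt hppos)
      nlinarith [h0, hb, hκpos, hppos, hdp]
    · apply le_of_forall_le_add_div hκpos
      intro p hp
      have hppos : (0:ℝ) < p := by exact_mod_cast hp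
      have hQpos : 1 ≤ c.Q t u' T p := Q_pos hu' hT hT0 hp
      obtain ⟨k, hk⟩ : ∃ k, c.Q t u' T p = k + 1 := ⟨c.Q t u' T p - 1, by omega⟩
      have hsurv : t < c.m (p • T + k • ({u'} : Multiset X)) :=
        (not_kill_iff hu' hT0 hp).1 (by omega)
      have h0 : 0 < c.w t u (p • T + k • ({u'} : Multiset X)) :=
        w_pos hu hex hsurv (add_ne_zero (nsmul_ne_zero hT0 hp))
      rw [w_add hu hex, w_smul hu hex, w_smul hu hex] at h0
      have hb := (aw_bounds hu' hT hT0 p hp).1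
      have hkr : (c.Q t u' T p : ℝ) = (k : ℝ) + 1 := by exact_mod_cast hk
      have hdp : ((- c.w t u {u'}) / p) * p = - c.w t u {u'} :=
        div_mul_cancel₀ _ (ne_of_gt hppos)
      nlinarith [h0, hb, hκpos, hppos, hdp, hkr]
  rcases eq_or_ne S 0 with rfl | hS0
  · rw [w_empty hu hex, w_empty hu' hex]; ring
  rcases lt_trichotomy (c.m S) t with hlt | heq | hgt
  · obtain ⟨v, hv⟩ := hex
    obtain ⟨L, hL, h⟩ := L_exists hv S
    have hvne : ({v} : Multiset X) ≠ 0 := by simp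
    have e1 : c.w t u (S + L • ({v} : Multiset X)) = c.w t u S + L * c.w t u {v} := by
      rw [w_add hu ⟨v, hv⟩, w_smul hu ⟨v, hv⟩]
    have e2 : c.w t u' (S + L • ({v} : Multiset X)) = c.w t u' S + L * c.w t u' {v} := by
      rw [w_add hu' ⟨v, hv⟩, w_smul hu' ⟨v, hv⟩]
    have hP1 := hP (S + L • ({v} : Multiset X)) (add_ne_zero' (nsmul_singleton_ne_zero hL)) h
    have hP2 := hP {v} hvne hv
    rw [e1, e2] at hP1
    nlinarith [hP1, hP2]
  · rw [w_zclass hu hex heq hS0, w_zclass hu' hex heq hS0]; ring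
  · exact hP S hS0 hgt

theorem w_sum (hu : c.m {u} < t) (hex : ∃ v : X, t < c.m {v}) :
    ∀ {n : ℕ} (x : Fin n → X), ∑ i, c.w t u {x i} = c.w t u ↑(List.ofFn x) := by
  intro n
  induction n with
  | zero =>
    intro x
    rw [Fin.sum_univ_zero, List.ofFn_zero]
    exact (w_empty hu hex).symm
  | succ j ih =>
    intro x
    rw [Fin.sum_univ_succ, ih (fun i => x i.succ), List.ofFn_succ]
    rw [show ((↑(x 0 :: List.ofFn fun i : Fin j => x i.succ)) : Multiset X)
        = {x 0} + ↑(List.ofFn fun i : Fin j => x i.succ) by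
      rw [← Multiset.cons_coe, ← Multiset.singleton_add]]
    rw [w_add hu hex]

end wTheory
end CW
end ZC

namespace ZC
namespace CW
open Filter Topology

variable {X : Type*} [Nonempty X] (c : CW X)

open scoped Classical in
/-- choice of a unit element below level `t`. -/
noncomputable def uat (t : ℝ) : X :=
  if h : ∃ u : X, c.m {u} < t then h.choose else Classical.arbitrary X

theorem uat_spec {t : ℝ} (h : ∃ u : X, c.m {u} < t) : c.m {c.uat t} < t := by
  rw [uat, dif_pos h]
  exact h.choose_spec

/-- the final ψ function (before bundling into the theorem). -/
noncomputable def psi (xb yb : X) (x : X) (t : ℝ) : ℝ :=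
  c.w t (c.uat t) {x} / (|c.w t (c.uat t) {xb}| + |c.w t (c.uat t) {yb}|)

variable {c}

theorem den_pos {t : ℝ} {u : X} (hu : c.m {u} < t) (hex : ∃ v : X, t < c.m {v})
    {xb yb : X} (hxy : c.m {yb} < c.m {xb}) :
    0 < |c.w t u {xb}| + |c.w t u {yb}| := by
  rcases eq_or_ne (c.m {xb}) t with he | hne
  · have h1 : c.w t u {yb} < 0 := w_neg hu hex (by rw [← he]; exact hxy) (by simp)
    have h2 := abs_pos.2 (ne_of_lt h1)
    linarith [abs_nonneg (c.w t u {xb})]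
  · have h1 : c.w t u {xb} ≠ 0 := by
      rcases lt_or_gt_of_ne hne with h | h
      · exact ne_of_lt (w_neg hu hex h (by simp))
      · exact ne_of_gt (w_pos hu hex h (by simp))
    linarith [abs_pos.2 h1, abs_nonneg (c.w t u {yb})]

theorem psi_eq {t : ℝ} {u : X} (hu : c.m {u} < t) (hex : ∃ v : X, t < c.m {v})
    (xb yb x : X) :
    c.psi xb yb x t = c.w t u {x} / (|c.w t u {xb}| + |c.w t u {yb}|) := by
  have hexu : ∃ u₀ : X, c.m {u₀} < t := ⟨u, hu⟩
  have hu0 : c.m {c.uat t} < t := uat_spec (c := c) hexu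
  have hκpos : 0 < - c.w t u {c.uat t} := by
    have := w_neg hu hex hu0 (by simp)
    linarith
  have hsc : ∀ S : Multiset X, c.w t u S = (- c.w t u {c.uat t}) * c.w t (c.uat t) S :=
    fun S => w_scale hu hu0 hex S
  rw [psi, hsc {x}, hsc {xb}, hsc {yb}, abs_mul, abs_mul, abs_of_pos hκpos, ← mul_add,
    mul_div_mul_left _ _ (ne_of_gt hκpos)]

theorem aw_continuousAt {t₁ : ℝ} {u : X} {S : Multiset X}
    (hu : c.m {u} < t₁) (hS : t₁ < c.m S) (hS0 : S ≠ 0) :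
    ContinuousAt (fun t => c.aw t u S) t₁ := by
  rw [Metric.continuousAt_iff]
  intro ε hε
  obtain ⟨δ, hδpos, hδ⟩ := aw_cont hu hS hS0 (half_pos hε)
  refine ⟨δ, hδpos, ?_⟩
  intro t' ht'
  rw [Real.dist_eq] at ht' ⊢
  have := hδ t' ht'
  linarith [half_lt_self hε]

theorem psi_continuousAt (xb yb x : X) (hxy : c.m {yb} < c.m {xb}) {t₁ l r : ℝ}
    (hl : l < t₁) (hr : t₁ < r) {u v : X} (hu : c.m {u} < l) (hv : r < c.m {v}) :
    ContinuousAt (c.psi xb yb x) t₁ := by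
  obtain ⟨Lx, hLx, hx⟩ := L_exists (t := r) hv ({x} : Multiset X)
  obtain ⟨La, hLa, ha⟩ := L_exists (t := r) hv ({xb} : Multiset X)
  obtain ⟨Lb, hLb, hb⟩ := L_exists (t := r) hv ({yb} : Multiset X)
  have hut1 : c.m {u} < t₁ := lt_trans hu hl
  have hvt1 : t₁ < c.m {v} := lt_trans hr hv
  set g : X → ℕ → ℝ → ℝ := fun e L t =>
    c.aw t u ({e} + L • ({v} : Multiset X)) - L * c.aw t u {v} with hg
  have hgc : ∀ (e : X) (L : ℕ), 1 ≤ L → r < c.m ({e} + L • ({v} : Multiset X)) →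
      ContinuousAt (g e L) t₁ := by
    intro e L hL he
    apply ContinuousAt.sub
    · exact aw_continuousAt hut1 (lt_trans hr he)
        (add_ne_zero' (nsmul_singleton_ne_zero hL))
    · exact (aw_continuousAt hut1 hvt1 (by simp)).const_mul _
  have heq : ∀ t ∈ Set.Ioo l r,
      c.psi xb yb x t = g x Lx t / (|g xb La t| + |g yb Lb t|) := by
    intro t ht
    have hut : c.m {u} < t := lt_trans hu ht.1
    have hvt : t < c.m {v} := lt_trans ht.2 hv
    have hex' : ∃ v' : X, t < c.m {v'} := ⟨v, hvt⟩
    rw [psi_eq hut hex' xb yb x]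
    rw [w_eq hut hvt hLx (lt_trans ht.2 hx), w_eq hut hvt hLa (lt_trans ht.2 ha),
      w_eq hut hvt hLb (lt_trans ht.2 hb)]
  have ht₁mem : t₁ ∈ Set.Ioo l r := ⟨hl, hr⟩
  have hden : |g xb La t₁| + |g yb Lb t₁| ≠ 0 := by
    have hex' : ∃ v' : X, t₁ < c.m {v'} := ⟨v, hvt1⟩
    have h1 := den_pos hut1 hex' hxy
    rw [w_eq hut1 hvt1 hLa (lt_trans hr ha), w_eq hut1 hvt1 hLb (lt_trans hr hb)] at h1
    exact ne_of_gt h1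
  have hc2 : ContinuousAt (fun t => g x Lx t / (|g xb La t| + |g yb Lb t|)) t₁ := by
    apply ContinuousAt.div
    · exact hgc x Lx hLx hx
    · exact ((hgc xb La hLa ha).abs.add (hgc yb Lb hLb hb).abs)
    · exact hden
  apply hc2.congr
  filter_upwards [Ioo_mem_nhds hl hr] with t ht
  exact (heq t ht).symm

end CW
end ZC

/-- Existence direction of the characterisation of Z-estimators:
a symmetric, strictly internal, asymptotically idempotent `M` with the range
conditions is the estimator family of some `ψ ∈ Ψ(X,Θ)` with properties
[Z] and [C]. -/
theorem exists_ZC_psi_of_symm_strictInternal_asympIdem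
    {X : Type*} [Nonempty X] (Θ : Set ℝ)
    (hΘo : IsOpen Θ) (hΘc : Θ.OrdConnected) (hΘnd : ∃ s ∈ Θ, ∃ t ∈ Θ, s < t)
    (M : ∀ n : ℕ, (Fin n → X) → ℝ)
    (hMΘ : ∀ n : ℕ, 0 < n → ∀ x : Fin n → X, M n x ∈ Θ)
    (hinf : sInf (Set.range fun x : X => (M 1 (fun _ => x) : EReal))
        = sInf (Real.toEReal '' Θ))
    (hsup : sSup (Set.range fun x : X => (M 1 (fun _ => x) : EReal))
        = sSup (Real.toEReal '' Θ))
    (hsym : ∀ n : ℕ, 0 < n → ∀ (x : Fin n → X) (π : Equiv.Perm (Fin n)),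
      M n (x ∘ π) = M n x)
    (hint : ∀ n k : ℕ, 0 < n → 0 < k → ∀ (x : Fin n → X) (y : Fin k → X),
      (min (M n x) (M k y) ≤ M (n + k) (Fin.append x y) ∧
        M (n + k) (Fin.append x y) ≤ max (M n x) (M k y)) ∧
      (M n x ≠ M k y →
        min (M n x) (M k y) < M (n + k) (Fin.append x y) ∧
        M (n + k) (Fin.append x y) < max (M n x) (M k y)))
    (hai : ∀ k : ℕ, 0 < k → ∀ (x : Fin k → X) (y : X),
      Tendsto (fun n : ℕ =>
          M (k * n + 1) (Fin.append (repBlock n x) (fun _ : Fin 1 => y)))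
        atTop (𝓝 (M k x))) :
    ∃ ψ : X → ℝ → ℝ, PsiClass Θ ψ ∧
      (∀ x : X, ContinuousOn (ψ x) Θ) ∧
      (∀ n : ℕ, 0 < n → IsThetaEst Θ ψ n (M n)) ∧
      (∀ n : ℕ, 0 < n → ∀ x : Fin n → X, ∑ i, ψ (x i) (M n x) = 0) := by
  classical
  let c : ZC.CW X :=
    { m := ZC.mval M
      min_le := fun {s u} hs hu => ((ZC.mval_internal hsym hint hs hu).1).1
      le_max := fun {s u} hs hu => ((ZC.mval_internal hsym hint hs hu).1).2
      min_lt := fun {s u} hs hu hne => ((ZC.mval_internal hsym hint hs hu).2 hne).1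
      lt_max := fun {s u} hs hu hne => ((ZC.mval_internal hsym hint hs hu).2 hne).2
      idem := fun {s} hs y => ZC.tendsto_mval_idem hsym hai hs y }
  have hm1 : ∀ x : X, c.m {x} = M 1 (fun _ => x) := fun x => ZC.mval_singleton hsym x
  have key : ∀ {n : ℕ} (x : Fin n → X), c.m ↑(List.ofFn x) = M n x :=
    fun x => ZC.mval_msOf hsym x
  have hmem : ∀ {s : Multiset X}, s ≠ 0 → c.m s ∈ Θ := by
    intro s hs
    obtain ⟨l, rfl⟩ := ZC.exists_coe_rep s
    have h1 : c.m ↑l = M l.length l.get := by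
      show ZC.mval M ↑l = _
      rw [ZC.mval_coe hsym]
      rfl
    rw [h1]
    exact hMΘ _ (List.length_pos_iff.2 (by simpa using hs)) _
  -- elements below and above any point of Θ
  have below : ∀ t ∈ Θ, ∃ u : X, c.m {u} < t := by
    intro t ht
    obtain ⟨ε, hε, hball⟩ := Metric.isOpen_iff.1 hΘo t ht
    have hl : t - ε / 2 ∈ Θ := by
      apply hball
      rw [Metric.mem_ball, Real.dist_eq]
      have h2 : t - ε / 2 - t = -(ε / 2) := by ring
      rw [h2, abs_neg, abs_of_pos (by linarith)]
      linarith
    by_contra hcon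
    push_neg at hcon
    have h1 : (t : EReal) ≤ sInf (Set.range fun x : X => (M 1 (fun _ => x) : EReal)) := by
      apply le_sInf
      rintro b ⟨x, rfl⟩
      have h2 := hcon x
      rw [hm1 x] at h2
      dsimp only
      exact_mod_cast h2
    rw [hinf] at h1
    have h2 : sInf (Real.toEReal '' Θ) ≤ ((t - ε / 2 : ℝ) : EReal) := sInf_le ⟨_, hl, rfl⟩
    have h3 := le_trans h1 h2
    rw [EReal.coe_le_coe_iff] at h3
    linarith
  have above : ∀ t ∈ Θ, ∃ v : X, t < c.m {v} := by
    intro t ht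
    obtain ⟨ε, hε, hball⟩ := Metric.isOpen_iff.1 hΘo t ht
    have hr : t + ε / 2 ∈ Θ := by
      apply hball
      rw [Metric.mem_ball, Real.dist_eq]
      have h2 : t + ε / 2 - t = ε / 2 := by ring
      rw [h2, abs_of_pos (by linarith)]
      linarith
    by_contra hcon
    push_neg at hcon
    have h1 : sSup (Set.range fun x : X => (M 1 (fun _ => x) : EReal)) ≤ (t : EReal) := by
      apply sSup_le
      rintro b ⟨x, rfl⟩
      have h2 := hcon x
      rw [hm1 x] at h2
      dsimp only
      exact_mod_cast h2
    rw [hsup] at h1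
    have h2 : ((t + ε / 2 : ℝ) : EReal) ≤ sSup (Real.toEReal '' Θ) := le_sSup ⟨_, hr, rfl⟩
    have h3 := le_trans h2 h1
    rw [EReal.coe_le_coe_iff] at h3
    linarith
  -- two elements with distinct values
  obtain ⟨xb, yb, hxy⟩ : ∃ xb yb : X, c.m {yb} < c.m {xb} := by
    by_contra hcon
    push_neg at hcon
    have hall : ∀ a b : X, c.m {a} = c.m {b} := fun a b =>
      le_antisymm (hcon a b) (hcon b a)
    obtain ⟨s, hs, t, ht, hst⟩ := hΘnd
    have x₀ : X := Classical.arbitrary X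
    have hrange : (Set.range fun x : X => (M 1 (fun _ => x) : EReal))
        = {((c.m {x₀} : ℝ) : EReal)} := by
      ext b
      constructor
      · rintro ⟨x, rfl⟩
        have h6 : M 1 (fun _ => x) = c.m {x₀} := by rw [← hm1 x]; exact hall x x₀
        dsimp only
        rw [h6]
        rfl
      · rintro rfl
        refine ⟨x₀, ?_⟩
        dsimp only
        rw [← hm1 x₀]
    have h1 : sInf (Real.toEReal '' Θ) = ((c.m {x₀} : ℝ) : EReal) := by
      rw [← hinf, hrange, csInf_singleton]
    have h2 : sSup (Real.toEReal '' Θ) = ((c.m {x₀} : ℝ) : EReal) := by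
      rw [← hsup, hrange, csSup_singleton]
    have h3 : sInf (Real.toEReal '' Θ) ≤ (s : EReal) := sInf_le ⟨s, hs, rfl⟩
    have h4 : (t : EReal) ≤ sSup (Real.toEReal '' Θ) := le_sSup ⟨t, ht, rfl⟩
    rw [h1] at h3
    rw [h2] at h4
    have h5 := le_trans h4 h3
    rw [EReal.coe_le_coe_iff] at h5
    linarith
  refine ⟨fun x t => c.psi xb yb x t, ?_, ?_, ?_, ?_⟩
  · -- PsiClass
    intro x
    have hx : c.m {x} ∈ Θ := hmem (by simp)
    obtain ⟨ε, hε, hball⟩ := Metric.isOpen_iff.1 hΘo _ hx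
    have htp : c.m {x} - ε / 2 ∈ Θ := by
      apply hball
      rw [Metric.mem_ball, Real.dist_eq]
      have h2 : c.m {x} - ε / 2 - c.m {x} = -(ε / 2) := by ring
      rw [h2, abs_neg, abs_of_pos (by linarith)]
      linarith
    have htm : c.m {x} + ε / 2 ∈ Θ := by
      apply hball
      rw [Metric.mem_ball, Real.dist_eq]
      have h2 : c.m {x} + ε / 2 - c.m {x} = ε / 2 := by ring
      rw [h2, abs_of_pos (by linarith)]
      linarith
    refine ⟨_, htp, _, htm, by linarith, ?_, ?_⟩
    · have hu := ZC.CW.uat_spec c (below _ htp)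
      have hex := above _ htp
      exact div_pos (ZC.CW.w_pos hu hex (by linarith) (by simp))
        (ZC.CW.den_pos hu hex hxy)
    · have hu := ZC.CW.uat_spec c (below _ htm)
      have hex := above _ htm
      exact div_neg_of_neg_of_pos (ZC.CW.w_neg hu hex (by linarith) (by simp))
        (ZC.CW.den_pos hu hex hxy)
  · -- continuity
    intro x t₁ ht₁
    apply ContinuousAt.continuousWithinAt
    obtain ⟨ε, hε, hball⟩ := Metric.isOpen_iff.1 hΘo t₁ ht₁
    have hl : t₁ - ε / 2 ∈ Θ := by
      apply hball
      rw [Metric.mem_ball, Real.dist_eq]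
      have h2 : t₁ - ε / 2 - t₁ = -(ε / 2) := by ring
      rw [h2, abs_neg, abs_of_pos (by linarith)]
      linarith
    have hr : t₁ + ε / 2 ∈ Θ := by
      apply hball
      rw [Metric.mem_ball, Real.dist_eq]
      have h2 : t₁ + ε / 2 - t₁ = ε / 2 := by ring
      rw [h2, abs_of_pos (by linarith)]
      linarith
    obtain ⟨u, hu⟩ := below _ hl
    obtain ⟨v, hv⟩ := above _ hr
    exact ZC.CW.psi_continuousAt xb yb x hxy (by linarith) (by linarith) hu hv
  · -- T_n property
    intro n hn x
    have hS0 : (↑(List.ofFn x) : Multiset X) ≠ 0 := by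
      rw [Ne, Multiset.coe_eq_zero, List.ofFn_eq_nil_iff]
      omega
    refine ⟨hMΘ n hn x, ?_, ?_⟩
    · intro t ht hlt
      have hu := ZC.CW.uat_spec c (below t ht)
      have hex := above t ht
      have hS : t < c.m ↑(List.ofFn x) := by rw [key]; exact hlt
      have hsum := ZC.CW.w_sum hu hex x
      show 0 < ∑ i, c.psi xb yb (x i) t
      simp only [ZC.CW.psi]
      rw [← Finset.sum_div, hsum]
      exact div_pos (ZC.CW.w_pos hu hex hS hS0) (ZC.CW.den_pos hu hex hxy)
    · intro t ht hlt
      have hu := ZC.CW.uat_spec c (below t ht)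
      have hex := above t ht
      have hS : c.m ↑(List.ofFn x) < t := by rw [key]; exact hlt
      have hsum := ZC.CW.w_sum hu hex x
      show ∑ i, c.psi xb yb (x i) t < 0
      simp only [ZC.CW.psi]
      rw [← Finset.sum_div, hsum]
      exact div_neg_of_neg_of_pos (ZC.CW.w_neg hu hex hS hS0) (ZC.CW.den_pos hu hex hxy)
  · -- Z property
    intro n hn x
    have hS0 : (↑(List.ofFn x) : Multiset X) ≠ 0 := by
      rw [Ne, Multiset.coe_eq_zero, List.ofFn_eq_nil_iff]
      omega
    have ht : M n x ∈ Θ := hMΘ n hn x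
    have hu := ZC.CW.uat_spec c (below _ ht)
    have hex := above _ ht
    have hsum := ZC.CW.w_sum hu hex x
    have hz : c.m ↑(List.ofFn x) = M n x := key x
    show ∑ i, c.psi xb yb (x i) (M n x) = 0
    simp only [ZC.CW.psi]
    rw [← Finset.sum_div, hsum, ZC.CW.w_zclass hu hex hz hS0, zero_div]
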